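/- arXiv:1208.2463 — 2 statements merged into one kernel-verified Lean document; each statement's English description precedes it below -/
import Mathlib

section
/- Let G be a stabilizable semistable directed multigraph. If the stabilization graph of G is strongly connected, then G is strongly connected. -/
open Relation

structure MDigraph where
  V : Type
  E : Type
  [hV : Finite V]
  [hE : Finite E]
  src : E → V
  tgt : E → V

attribute [instance] MDigraph.hV MDigraph.hE

namespace MDigraph

noncomputable def degOut (G : MDigraph) (v : G.V) : ℕ := Nat.card {e : G.E // G.src e = v}
noncomputable def degIn (G : MDigraph) (v : G.V) : ℕ := Nat.card {e : G.E // G.tgt e = v}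

def Semistable (G : MDigraph) : Prop :=
  ∀ v : G.V, 1 ≤ G.degIn v ∧ 1 ≤ G.degOut v ∧ 3 ≤ G.degIn v + G.degOut v

def Stable (G : MDigraph) : Prop :=
  ∀ v : G.V, 2 ≤ G.degIn v ∧ 2 ≤ G.degOut v

def Contractible (G : MDigraph) (e : G.E) : Prop :=
  G.src e ≠ G.tgt e ∧ (G.degOut (G.src e) = 1 ∨ G.degIn (G.tgt e) = 1)

def mergeRel (G : MDigraph) (e0 : G.E) (a b : G.V) : Prop :=
  a = b ∨ ((a = G.src e0 ∨ a = G.tgt e0) ∧ (b = G.src e0 ∨ b = G.tgt e0))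

def contract (G : MDigraph) (e0 : G.E) : MDigraph where
  V := Quot (G.mergeRel e0)
  E := {e : G.E // e ≠ e0}
  src e := Quot.mk _ (G.src e.1)
  tgt e := Quot.mk _ (G.tgt e.1)

structure Iso (G H : MDigraph) where
  vEquiv : G.V ≃ H.V
  eEquiv : G.E ≃ H.E
  src_map : ∀ e, H.src (eEquiv e) = vEquiv (G.src e)
  tgt_map : ∀ e, H.tgt (eEquiv e) = vEquiv (G.tgt e)

def Adj (G : MDigraph) (a b : G.V) : Prop := ∃ e, G.src e = a ∧ G.tgt e = b

def Strong (G : MDigraph) : Prop := ∀ a b : G.V, ReflTransGen G.Adj a b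

def ContractStep (G H : MDigraph) : Prop :=
  ∃ e0 : G.E, G.Contractible e0 ∧ Nonempty (Iso (G.contract e0) H)

def IsStabilization (G H : MDigraph) : Prop :=
  ReflTransGen ContractStep G H ∧ H.Stable

def Stabilizable (G : MDigraph) : Prop := ∃ H, G.IsStabilization H

def IsLinear (G : MDigraph) (L : Set G.E) : Prop :=
  ∀ v : G.V, Nat.card {e : G.E // e ∈ L ∧ G.src e = v} = Nat.card {e : G.E // e ∈ L ∧ G.tgt e = v}
    ∧ Nat.card {e : G.E // e ∈ L ∧ G.src e = v} ≤ 1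

def LAdj (G : MDigraph) (L : Set G.E) (a b : G.V) : Prop := ∃ e ∈ L, G.src e = a ∧ G.tgt e = b

def supp (G : MDigraph) (L : Set G.E) : Set G.V := {v | ∃ e ∈ L, G.src e = v ∨ G.tgt e = v}

noncomputable def components (G : MDigraph) (L : Set G.E) : ℕ :=
  Nat.card (Quot (fun a b : G.supp L => G.LAdj L a.1 b.1))

noncomputable def adjMatrix (G : MDigraph) : Matrix G.V G.V ℤ :=
  Matrix.of fun a b => (Nat.card {e : G.E // G.src e = a ∧ G.tgt e = b} : ℤ)

open Classical in
noncomputable def detIA (G : MDigraph) : ℤ :=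
  letI := Fintype.ofFinite G.V
  ((1 : Matrix G.V G.V ℤ) - G.adjMatrix).det

noncomputable def weight (G : MDigraph) : ℤ := (Nat.card G.E : ℤ) - (Nat.card G.V : ℤ)

noncomputable def numLinear (G : MDigraph) : ℕ := Nat.card {L : Set G.E // G.IsLinear L}

end MDigraph

noncomputable example (G : MDigraph) (C : ℤ) : ℤ := ∑ᶠ L : {L : Set G.E // G.IsLinear L}, C ^ G.components L.1

/-! Induct along the contraction sequence: contraction preserves semistability, so it
suffices to lift strong connectivity along one contraction of `e₀ : s → t`. Paths of `G/e₀`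
lift to paths of `G` with an extra edge `t → s` adjoined, so `G` is strong as soon as `t`
reaches `s` in `G`. If `e₀` is the only edge out of `s`, every vertex reached from `t` in the
augmented graph is `s` or is reached from `t` in `G`; as `s` has an incoming edge, which cannot
start at `s`, `t` reaches `s`. The case where `e₀` is the only edge into `t` is the same
argument in the reversed graph. -/

namespace Relation

variable {α : Type*} {r : α → α → Prop} {s t : α}

lemma reflTransGen_of_forall_reflTransGen_adjoin (hst : s ≠ t) (hsucc : ∀ z, r s z → z = t)
    (hpred : ∃ x, r x s) (h : ∀ y, ReflTransGen (fun a b => r a b ∨ a = t ∧ b = s) t y) :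
    ReflTransGen r t s := by
  have reach : ∀ y, ReflTransGen (fun a b => r a b ∨ a = t ∧ b = s) t y →
      y = s ∨ ReflTransGen r t y := by
    intro y hy
    induction hy with
    | refl => exact Or.inr .refl
    | tail _ hyz ih =>
      rcases hyz with hyz | ⟨-, rfl⟩
      · rcases ih with rfl | hty
        · exact Or.inr (hsucc _ hyz ▸ .refl)
        · exact Or.inr (hty.tail hyz)
      · exact Or.inl rfl
  obtain ⟨x, hx⟩ := hpred
  rcases reach x (h x) with rfl | htx
  · exact absurd (hsucc _ hx) hst
  · exact htx.tail hx

end Relation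

namespace MDigraph

open Relation

variable {G H : MDigraph}

lemma mergeRel_equivalence (G : MDigraph) (e0 : G.E) : Equivalence (G.mergeRel e0) where
  refl _ := Or.inl rfl
  symm := by
    rintro a b (rfl | ⟨ha, hb⟩)
    exacts [Or.inl rfl, Or.inr ⟨hb, ha⟩]
  trans := by
    rintro a b c (rfl | ⟨ha, hb⟩) (rfl | ⟨hb', hc⟩)
    exacts [Or.inl rfl, Or.inr ⟨hb', hc⟩, Or.inr ⟨ha, hb⟩, Or.inr ⟨ha, hc⟩]

lemma mk_eq_mk {e0 : G.E} {a b : G.V} :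
    Quot.mk (G.mergeRel e0) a = Quot.mk (G.mergeRel e0) b ↔ G.mergeRel e0 a b := by
  rw [Quot.eq, (G.mergeRel_equivalence e0).eqvGen_iff]

lemma reflTransGen_of_mergeRel {e0 : G.E} {r : G.V → G.V → Prop}
    (hst : ReflTransGen r (G.src e0) (G.tgt e0)) (hts : ReflTransGen r (G.tgt e0) (G.src e0))
    {a b : G.V} (h : G.mergeRel e0 a b) : ReflTransGen r a b := by
  rcases h with rfl | ⟨rfl | rfl, rfl | rfl⟩
  exacts [.refl, .refl, hst, hts, .refl]

lemma reflTransGen_of_reflTransGen_contract {e0 : G.E} {r : G.V → G.V → Prop}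
    (hadj : ∀ a b, G.Adj a b → r a b)
    (hmerge : ∀ a b, G.mergeRel e0 a b → ReflTransGen r a b)
    {a b : G.V} (h : ReflTransGen (G.contract e0).Adj (Quot.mk _ a) (Quot.mk _ b)) :
    ReflTransGen r a b := by
  suffices ∀ q, ReflTransGen (G.contract e0).Adj (Quot.mk _ a) q →
      ∀ b, Quot.mk _ b = q → ReflTransGen r a b from this _ h b rfl
  intro q hq
  induction hq with
  | refl => exact fun b hb => hmerge a b (mk_eq_mk.mp hb.symm)
  | tail _ hadj' ih =>
    obtain ⟨e, hsrc, htgt⟩ := hadj'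
    intro b hb
    exact ((ih _ hsrc).tail (hadj _ _ ⟨e.1, rfl, rfl⟩)).trans
      (hmerge _ _ (mk_eq_mk.mp (htgt.trans hb.symm)))

lemma degIn_le_degIn_contract {e0 : G.E} {v : G.V} (h : v ≠ G.tgt e0) :
    G.degIn v ≤ (G.contract e0).degIn (Quot.mk _ v) :=
  Nat.card_le_card_of_injective
    (fun e => ⟨⟨e.1, fun he => h (e.2 ▸ he ▸ rfl)⟩, congrArg (Quot.mk _) e.2⟩)
    fun _ _ he => Subtype.ext (congrArg (fun e => e.1.1) he)

lemma degOut_le_degOut_contract {e0 : G.E} {v : G.V} (h : v ≠ G.src e0) :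
    G.degOut v ≤ (G.contract e0).degOut (Quot.mk _ v) :=
  Nat.card_le_card_of_injective
    (fun e => ⟨⟨e.1, fun he => h (e.2 ▸ he ▸ rfl)⟩, congrArg (Quot.mk _) e.2⟩)
    fun _ _ he => Subtype.ext (congrArg (fun e => e.1.1) he)

lemma Semistable.contract {e0 : G.E} (hG : G.Semistable) (hc : G.Contractible e0) :
    (G.contract e0).Semistable := by
  obtain ⟨hne, hdeg⟩ := hc
  rintro ⟨v⟩
  by_cases hv : G.mergeRel e0 v (G.src e0)
  · have hIn := degIn_le_degIn_contract (e0 := e0) hne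
    have hOut := degOut_le_degOut_contract (e0 := e0) hne.symm
    rw [mk_eq_mk.mpr (Or.inr ⟨Or.inr rfl, Or.inl rfl⟩)] at hOut
    rw [mk_eq_mk.mpr hv]
    have := hG (G.src e0)
    have := hG (G.tgt e0)
    omega
  · have hIn := degIn_le_degIn_contract (e0 := e0) (v := v)
      fun h => hv (Or.inr ⟨Or.inr h, Or.inl rfl⟩)
    have hOut := degOut_le_degOut_contract (e0 := e0) (v := v) fun h => hv (Or.inl h)
    have := hG v
    omega

lemma Semistable.exists_adj_to (hG : G.Semistable) (v : G.V) : ∃ x, G.Adj x v :=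
  have ⟨⟨e, he⟩⟩ := (Nat.card_pos_iff.mp (hG v).1).1
  ⟨G.src e, e, rfl, he⟩

lemma Semistable.exists_adj_from (hG : G.Semistable) (v : G.V) : ∃ y, G.Adj v y :=
  have ⟨⟨e, he⟩⟩ := (Nat.card_pos_iff.mp (hG v).2.1).1
  ⟨G.tgt e, e, he, rfl⟩

lemma eq_of_degOut_eq_one {v : G.V} (h : G.degOut v = 1) {e e' : G.E} (he : G.src e = v)
    (he' : G.src e' = v) : e = e' :=
  congrArg Subtype.val ((Nat.card_eq_one_iff_unique.mp h).1.elim ⟨e, he⟩ ⟨e', he'⟩)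

lemma eq_of_degIn_eq_one {v : G.V} (h : G.degIn v = 1) {e e' : G.E} (he : G.tgt e = v)
    (he' : G.tgt e' = v) : e = e' :=
  congrArg Subtype.val ((Nat.card_eq_one_iff_unique.mp h).1.elim ⟨e, he⟩ ⟨e', he'⟩)

lemma Strong.of_contract {e0 : G.E} (hG : G.Semistable) (hc : G.Contractible e0)
    (hC : (G.contract e0).Strong) : G.Strong := by
  obtain ⟨hne, hdeg⟩ := hc
  have hst : ReflTransGen G.Adj (G.src e0) (G.tgt e0) := .single ⟨e0, rfl, rfl⟩
  have haug : ∀ a b, ReflTransGen (fun x y => G.Adj x y ∨ x = G.tgt e0 ∧ y = G.src e0) a b :=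
    fun a b => reflTransGen_of_reflTransGen_contract (fun _ _ => Or.inl)
      (fun _ _ => reflTransGen_of_mergeRel (ReflTransGen.mono (fun _ _ => Or.inl) _ _ hst)
        (.single (Or.inr ⟨rfl, rfl⟩)))
      (hC (Quot.mk _ a) (Quot.mk _ b))
  have hts : ReflTransGen G.Adj (G.tgt e0) (G.src e0) := by
    rcases hdeg with hout | hin
    · refine reflTransGen_of_forall_reflTransGen_adjoin hne ?_ (hG.exists_adj_to _) (haug _)
      rintro z ⟨e, hs, rfl⟩
      rw [eq_of_degOut_eq_one hout hs rfl]
    · have hswap := reflTransGen_of_forall_reflTransGen_adjoin (r := Function.swap G.Adj)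
        hne.symm (by rintro z ⟨e, rfl, ht⟩; rw [eq_of_degIn_eq_one hin ht rfl])
        (hG.exists_adj_from _) fun y => reflTransGen_swap.mpr
          (ReflTransGen.mono (fun _ _ => Or.imp_right And.symm) _ _ (haug y _))
      exact reflTransGen_swap.mp hswap
  exact fun a b => reflTransGen_of_reflTransGen_contract (fun _ _ => id)
    (fun _ _ => reflTransGen_of_mergeRel hst hts) (hC (Quot.mk _ a) (Quot.mk _ b))

def Iso.symm (i : Iso G H) : Iso H G where
  vEquiv := i.vEquiv.symm
  eEquiv := i.eEquiv.symm
  src_map e := i.vEquiv.injective <| by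
    rw [Equiv.apply_symm_apply, ← i.src_map, Equiv.apply_symm_apply]
  tgt_map e := i.vEquiv.injective <| by
    rw [Equiv.apply_symm_apply, ← i.tgt_map, Equiv.apply_symm_apply]

lemma Iso.adj (i : Iso G H) {a b : G.V} (h : G.Adj a b) : H.Adj (i.vEquiv a) (i.vEquiv b) :=
  have ⟨e, hs, ht⟩ := h
  ⟨i.eEquiv e, by rw [i.src_map, hs], by rw [i.tgt_map, ht]⟩

lemma Iso.strong (i : Iso G H) (h : G.Strong) : H.Strong := fun a b => by
  simpa only [Function.onFun, Equiv.apply_symm_apply] using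
    (h (i.vEquiv.symm a) (i.vEquiv.symm b)).lift i.vEquiv fun _ _ => i.adj

lemma Iso.degIn_eq (i : Iso G H) (v : G.V) : H.degIn (i.vEquiv v) = G.degIn v :=
  (Nat.card_congr <| i.eEquiv.subtypeEquiv fun e => by
    rw [i.tgt_map, i.vEquiv.apply_eq_iff_eq]).symm

lemma Iso.degOut_eq (i : Iso G H) (v : G.V) : H.degOut (i.vEquiv v) = G.degOut v :=
  (Nat.card_congr <| i.eEquiv.subtypeEquiv fun e => by
    rw [i.src_map, i.vEquiv.apply_eq_iff_eq]).symm

lemma Iso.semistable (i : Iso G H) (h : G.Semistable) : H.Semistable := fun v => by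
  obtain ⟨w, rfl⟩ := i.vEquiv.surjective v
  rw [i.degIn_eq, i.degOut_eq]
  exact h w

end MDigraph

/-- A stabilizable semistable graph whose stabilization graph is strongly
connected is itself strongly connected. -/
theorem strong_of_strong_stabilization (G H : MDigraph) (hG : G.Semistable)
    (hst : G.IsStabilization H) (hH : H.Strong) : G.Strong := by
  obtain ⟨hchain, -⟩ := hst
  induction hchain using Relation.ReflTransGen.head_induction_on with
  | refl => exact hH
  | head hstep _ ih =>
    obtain ⟨e0, hc, ⟨i⟩⟩ := hstep
    exact MDigraph.Strong.of_contract hG hc (i.symm.strong (ih (i.semistable (hG.contract hc))))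
end

section
/- Let H be a semistable directed multigraph and let H' be obtained from H by contracting a contractible edge e = uv. Then the map sending a linear subgraph L of H to L itself (if e ∉ L) or to L with e contracted (if e ∈ L) is a bijection from the set of linear subgraphs of H to the set of linear subgraphs of H', and it preserves the number of connected components. -/
open Relation

noncomputable example (G : MDigraph) (C : ℤ) : ℤ := ∑ᶠ L : {L : Set G.E // G.IsLinear L}, C ^ G.components L.1

/-!
Write `s → t` for the contracted edge `e0`. The edges of the contraction are the edges of `H`
other than `e0`, so only degrees in `L \ {e0}` are visible there: a vertex `v ∉ {s, t}` keeps its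
in- and out-degree, and the merged vertex `[s] = [t]` gets the sums of those of `s` and `t`.
Contractibility says that `e0` is the only edge leaving `s` or the only edge entering `t`; with
this, the degree conditions show that a linear subgraph `L'` of the contraction comes from exactly
one linear subgraph of `H`: `L'` itself, with `e0` added exactly when `s` has an incoming edge of
`L'` but no outgoing one. The vertex map `v ↦ [v]` only identifies `s` and `t`,
and when both are covered by a linear `L` the edge `e0` lies in `L`, so they are in the same
cycle; hence the map induces a bijection on cycles.
-/

open Set

lemma Set.ncard_sep_eq_sdiff_add {α : Type*} [Finite α] (s : Set α) (a : α) (p : α → Prop)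
    [Decidable (a ∈ s ∧ p a)] :
    {x ∈ s | p x}.ncard = {x ∈ s \ {a} | p x}.ncard + if a ∈ s ∧ p a then 1 else 0 := by
  have hsep : {x ∈ s \ {a} | p x} = {x ∈ s | p x} \ {a} := by
    ext x
    simp only [mem_sdiff, mem_singleton_iff, mem_ofPred_eq]
    tauto
  rw [hsep]
  split_ifs with ha
  · exact (ncard_sdiff_singleton_add_one (s := {x ∈ s | p x}) ha).symm
  · rw [sdiff_singleton_eq_self (s := {x ∈ s | p x}) ha, add_zero]

theorem Nat.card_quot_eq_of_surjective {X Y : Type*} {r : X → X → Prop} {r' : Y → Y → Prop}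
    (φ : X → Y) (hφ : Function.Surjective φ)
    (hr : ∀ a b, r a b → Quot.mk r' (φ a) = Quot.mk r' (φ b))
    (hfib : ∀ a b, φ a = φ b → Quot.mk r a = Quot.mk r b)
    (hr' : ∀ a b, r' (φ a) (φ b) → Quot.mk r a = Quot.mk r b) :
    Nat.card (Quot r) = Nat.card (Quot r') := by
  have hinj : ∀ y y', EqvGen r' y y' → ∀ a b, φ a = y → φ b = y' →
      Quot.mk r a = Quot.mk r b := by
    intro y y' h
    induction h with
    | rel y y' h =>
      rintro a b rfl rfl
      exact hr' a b h
    | refl y => exact fun a b ha hb => hfib a b (ha.trans hb.symm)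
    | symm y y' _ ih => exact fun a b ha hb => (ih b a hb ha).symm
    | trans y y' y'' _ _ ih ih' =>
      intro a b ha hb
      obtain ⟨c, rfl⟩ := hφ y'
      exact (ih a c ha rfl).trans (ih' c b rfl hb)
  refine Nat.card_congr (Equiv.ofBijective (Quot.lift (fun a => Quot.mk r' (φ a)) hr) ⟨?_, ?_⟩)
  · rintro ⟨a⟩ ⟨b⟩ h
    exact hinj _ _ (Quot.eqvGen_exact h) a b rfl rfl
  · rintro ⟨y⟩
    obtain ⟨a, rfl⟩ := hφ y
    exact ⟨Quot.mk r a, rfl⟩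

namespace MDigraph

noncomputable def subDegOut (G : MDigraph) (L : Set G.E) (v : G.V) : ℕ :=
  {e ∈ L | G.src e = v}.ncard

noncomputable def subDegIn (G : MDigraph) (L : Set G.E) (v : G.V) : ℕ :=
  {e ∈ L | G.tgt e = v}.ncard

def IsLinearAt (G : MDigraph) (L : Set G.E) (v : G.V) : Prop :=
  G.subDegOut L v = G.subDegIn L v ∧ G.subDegOut L v ≤ 1

section

variable {G : MDigraph} {L : Set G.E}

lemma isLinear_iff_isLinearAt_split (a b : G.V) :
    G.IsLinear L ↔ G.IsLinearAt L a ∧ G.IsLinearAt L b ∧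
      ∀ v, v ≠ a → v ≠ b → G.IsLinearAt L v := by
  refine ⟨fun h => ⟨h a, h b, fun v _ _ => h v⟩, fun ⟨ha, hb, h⟩ v => ?_⟩
  by_cases hva : v = a
  · exact hva ▸ ha
  by_cases hvb : v = b
  · exact hvb ▸ hb
  exact h v hva hvb

lemma exists_src_iff_exists_tgt (hL : G.IsLinear L) (v : G.V) :
    (∃ e ∈ L, G.src e = v) ↔ ∃ e ∈ L, G.tgt e = v := by
  obtain ⟨h, -⟩ : G.IsLinearAt L v := hL v
  change (∃ e, e ∈ {e ∈ L | G.src e = v}) ↔ ∃ e, e ∈ {e ∈ L | G.tgt e = v}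
  rw [← Set.Nonempty, ← Set.Nonempty, ← ncard_pos, ← ncard_pos]
  exact iff_of_eq (congrArg _ h)

lemma exists_src_of_mem_supp (hL : G.IsLinear L) {v : G.V} (hv : v ∈ G.supp L) :
    ∃ e ∈ L, G.src e = v := by
  obtain ⟨e, he, h | h⟩ := hv
  exacts [⟨e, he, h⟩, (exists_src_iff_exists_tgt hL v).2 ⟨e, he, h⟩]

lemma exists_tgt_of_mem_supp (hL : G.IsLinear L) {v : G.V} (hv : v ∈ G.supp L) :
    ∃ e ∈ L, G.tgt e = v := by
  obtain ⟨e, he, h | h⟩ := hv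
  exacts [(exists_src_iff_exists_tgt hL v).1 ⟨e, he, h⟩, ⟨e, he, h⟩]

open Classical in
lemma subDegOut_eq_sdiff_add (a : G.E) (M : Set G.E) (v : G.V) :
    G.subDegOut M v = G.subDegOut (M \ {a}) v + if a ∈ M ∧ G.src a = v then 1 else 0 :=
  Set.ncard_sep_eq_sdiff_add M a _

open Classical in
lemma subDegIn_eq_sdiff_add (a : G.E) (M : Set G.E) (v : G.V) :
    G.subDegIn M v = G.subDegIn (M \ {a}) v + if a ∈ M ∧ G.tgt a = v then 1 else 0 :=
  Set.ncard_sep_eq_sdiff_add M a _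

end

variable {H : MDigraph} {e0 : H.E}

open Classical in
lemma subDeg_src_tgt_eq (hst : H.src e0 ≠ H.tgt e0) (M : Set H.E) :
    H.subDegOut M (H.src e0) = H.subDegOut (M \ {e0}) (H.src e0) + (if e0 ∈ M then 1 else 0) ∧
    H.subDegIn M (H.src e0) = H.subDegIn (M \ {e0}) (H.src e0) ∧
    H.subDegOut M (H.tgt e0) = H.subDegOut (M \ {e0}) (H.tgt e0) ∧
    H.subDegIn M (H.tgt e0) = H.subDegIn (M \ {e0}) (H.tgt e0) + (if e0 ∈ M then 1 else 0) := by
  simp [subDegOut_eq_sdiff_add e0 M, subDegIn_eq_sdiff_add e0 M, hst, hst.symm]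

lemma isLinearAt_sdiff_iff {v : H.V} (hs : v ≠ H.src e0) (ht : v ≠ H.tgt e0) (M : Set H.E) :
    H.IsLinearAt (M \ {e0}) v ↔ H.IsLinearAt M v := by
  simp [IsLinearAt, subDegOut_eq_sdiff_add e0 M v, subDegIn_eq_sdiff_add e0 M v, hs.symm, ht.symm]

lemma mergeRel_equivalence_s7 (e0 : H.E) : Equivalence (H.mergeRel e0) where
  refl _ := Or.inl rfl
  symm := by
    rintro a b (rfl | ⟨ha, hb⟩)
    exacts [Or.inl rfl, Or.inr ⟨hb, ha⟩]
  trans := by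
    rintro a b c (rfl | ⟨ha, hb⟩) (rfl | ⟨hb', hc⟩)
    exacts [Or.inl rfl, Or.inr ⟨hb', hc⟩, Or.inr ⟨ha, hb⟩, Or.inr ⟨ha, hc⟩]

lemma mk_eq_mk_iff {a b : H.V} :
    Quot.mk (H.mergeRel e0) a = Quot.mk _ b ↔ H.mergeRel e0 a b :=
  Quot.eq.trans (mergeRel_equivalence_s7 e0).eqvGen_iff

lemma mk_tgt_eq_mk_src : Quot.mk (H.mergeRel e0) (H.tgt e0) = Quot.mk _ (H.src e0) :=
  Quot.sound (Or.inr ⟨Or.inr rfl, Or.inl rfl⟩)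

lemma mergeRel_iff_of_ne {a v : H.V} (hs : v ≠ H.src e0) (ht : v ≠ H.tgt e0) :
    H.mergeRel e0 a v ↔ a = v := by
  refine ⟨?_, Or.inl⟩
  rintro (h | ⟨-, rfl | rfl⟩)
  exacts [h, absurd rfl hs, absurd rfl ht]

lemma mergeRel_src_iff {a : H.V} :
    H.mergeRel e0 a (H.src e0) ↔ a = H.src e0 ∨ a = H.tgt e0 :=
  ⟨fun h => h.elim (fun h => Or.inl h) And.left, fun h => Or.inr ⟨h, Or.inl rfl⟩⟩

lemma ncard_contract_sep (f : H.E → H.V) (M : Set H.E) (v : H.V) :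
    {e : (H.contract e0).E | e.1 ∈ M ∧ Quot.mk (H.mergeRel e0) (f e.1) = Quot.mk _ v}.ncard =
      {e ∈ M \ {e0} | H.mergeRel e0 (f e) v}.ncard := by
  have hval : Function.Injective fun e : (H.contract e0).E => e.1 := Subtype.val_injective
  refine (ncard_image_of_injective _ hval).symm.trans (congrArg ncard ?_)
  ext e
  simp only [mem_image, mem_ofPred_eq, mk_eq_mk_iff, mem_sdiff, mem_singleton_iff]
  constructor
  · rintro ⟨x, ⟨hxM, hx⟩, rfl⟩
    exact ⟨⟨hxM, x.2⟩, hx⟩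
  · rintro ⟨⟨heM, he⟩, hv⟩
    exact ⟨⟨e, he⟩, ⟨heM, hv⟩, rfl⟩

lemma ncard_contract_sep_of_ne (f : H.E → H.V) (M : Set H.E) {v : H.V} (hs : v ≠ H.src e0)
    (ht : v ≠ H.tgt e0) :
    {e : (H.contract e0).E | e.1 ∈ M ∧ Quot.mk (H.mergeRel e0) (f e.1) = Quot.mk _ v}.ncard =
      {e ∈ M \ {e0} | f e = v}.ncard := by
  simp_rw [ncard_contract_sep, mergeRel_iff_of_ne hs ht]

lemma ncard_contract_sep_src (hst : H.src e0 ≠ H.tgt e0) (f : H.E → H.V) (M : Set H.E) :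
    {e : (H.contract e0).E |
        e.1 ∈ M ∧ Quot.mk (H.mergeRel e0) (f e.1) = Quot.mk _ (H.src e0)}.ncard =
      {e ∈ M \ {e0} | f e = H.src e0}.ncard + {e ∈ M \ {e0} | f e = H.tgt e0}.ncard := by
  simp_rw [ncard_contract_sep, mergeRel_src_iff, sep_or]
  refine ncard_union_eq ?_
  exact disjoint_left.2 fun e he he' => hst (he.2.symm.trans he'.2)

lemma subDegOut_contract_of_ne {v : H.V} (hs : v ≠ H.src e0) (ht : v ≠ H.tgt e0)
    (M : Set H.E) :
    (H.contract e0).subDegOut {e | e.1 ∈ M} (Quot.mk _ v) = H.subDegOut (M \ {e0}) v :=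
  ncard_contract_sep_of_ne H.src M hs ht

lemma subDegIn_contract_of_ne {v : H.V} (hs : v ≠ H.src e0) (ht : v ≠ H.tgt e0)
    (M : Set H.E) :
    (H.contract e0).subDegIn {e | e.1 ∈ M} (Quot.mk _ v) = H.subDegIn (M \ {e0}) v :=
  ncard_contract_sep_of_ne H.tgt M hs ht

lemma isLinearAt_contract_iff {v : H.V} (hs : v ≠ H.src e0) (ht : v ≠ H.tgt e0)
    (M : Set H.E) :
    (H.contract e0).IsLinearAt {e | e.1 ∈ M} (Quot.mk _ v) ↔ H.IsLinearAt M v := by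
  rw [← isLinearAt_sdiff_iff hs ht]
  unfold IsLinearAt
  rw [subDegOut_contract_of_ne hs ht, subDegIn_contract_of_ne hs ht]

lemma subDegOut_contract_src (hst : H.src e0 ≠ H.tgt e0) (M : Set H.E) :
    (H.contract e0).subDegOut {e | e.1 ∈ M} (Quot.mk _ (H.src e0)) =
      H.subDegOut (M \ {e0}) (H.src e0) + H.subDegOut (M \ {e0}) (H.tgt e0) :=
  ncard_contract_sep_src hst H.src M

lemma subDegIn_contract_src (hst : H.src e0 ≠ H.tgt e0) (M : Set H.E) :
    (H.contract e0).subDegIn {e | e.1 ∈ M} (Quot.mk _ (H.src e0)) =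
      H.subDegIn (M \ {e0}) (H.src e0) + H.subDegIn (M \ {e0}) (H.tgt e0) :=
  ncard_contract_sep_src hst H.tgt M

lemma isLinear_contract_iff (M : Set H.E) :
    (H.contract e0).IsLinear {e | e.1 ∈ M} ↔
      (H.contract e0).IsLinearAt {e | e.1 ∈ M} (Quot.mk _ (H.src e0)) ∧
        ∀ v, v ≠ H.src e0 → v ≠ H.tgt e0 → H.IsLinearAt M v := by
  refine ⟨fun h => ⟨h _, fun v hs ht => (isLinearAt_contract_iff hs ht M).1 (h _)⟩, ?_⟩
  rintro ⟨hsrc, h⟩ x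
  induction x using Quot.ind with
  | mk v =>
    by_cases hs : v = H.src e0
    · exact hs ▸ hsrc
    by_cases ht : v = H.tgt e0
    · exact ht ▸ mk_tgt_eq_mk_src (e0 := e0) ▸ hsrc
    exact (isLinearAt_contract_iff hs ht M).2 (h v hs ht)

lemma Contractible.src_unique_or_tgt_unique (hc : H.Contractible e0) :
    (∀ e, H.src e = H.src e0 → e = e0) ∨ (∀ e, H.tgt e = H.tgt e0 → e = e0) := by
  refine hc.2.imp (fun h e he => ?_) (fun h e he => ?_)
  · exact congrArg Subtype.val ((Nat.card_eq_one_iff_unique.1 h).1.elim ⟨e, he⟩ ⟨e0, rfl⟩)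
  · exact congrArg Subtype.val ((Nat.card_eq_one_iff_unique.1 h).1.elim ⟨e, he⟩ ⟨e0, rfl⟩)

lemma Contractible.subDegOut_src_eq_zero_or (hc : H.Contractible e0) (M : Set H.E) :
    H.subDegOut (M \ {e0}) (H.src e0) = 0 ∨ H.subDegIn (M \ {e0}) (H.tgt e0) = 0 := by
  refine hc.src_unique_or_tgt_unique.imp (fun h => ?_) (fun h => ?_) <;>
    exact (ncard_eq_zero (toFinite _)).2 (eq_empty_of_forall_notMem fun e he => he.1.2 (h e he.2))

lemma isLinear_contract (hc : H.Contractible e0) {M : Set H.E} (hM : H.IsLinear M) :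
    (H.contract e0).IsLinear {e | e.1 ∈ M} := by
  rw [isLinear_iff_isLinearAt_split (H.src e0) (H.tgt e0)] at hM
  obtain ⟨⟨hs, hs'⟩, ⟨ht, ht'⟩, hv⟩ := hM
  refine (isLinear_contract_iff M).2 ⟨?_, hv⟩
  obtain ⟨d1, d2, d3, d4⟩ := subDeg_src_tgt_eq hc.1 M
  have h0 := hc.subDegOut_src_eq_zero_or M
  unfold IsLinearAt
  rw [subDegOut_contract_src hc.1, subDegIn_contract_src hc.1]
  split_ifs at d1 d4 <;> omega

/- An incoming but no outgoing edge at `src e0` is how `L \ {e0}` looks there for a linear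
`L ∋ e0`. The image is taken along `fun e : (H.contract e0).E => e.1` rather than `Subtype.val`
so that it is a set over `(H.contract e0).E`, not `{e // e ≠ e0}`; otherwise rewriting fails. -/
open Classical in
noncomputable def uncontract (H : MDigraph) (e0 : H.E) (L' : Set (H.contract e0).E) : Set H.E :=
  let N := (fun e : (H.contract e0).E => e.1) '' L'
  if H.subDegOut N (H.src e0) < H.subDegIn N (H.src e0) then insert e0 N else N

lemma notMem_image_val (L' : Set (H.contract e0).E) :
    e0 ∉ (fun e : (H.contract e0).E => e.1) '' L' :=
  fun ⟨e, _, he⟩ => e.2 he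

lemma image_val_contract (M : Set H.E) :
    (fun e : (H.contract e0).E => e.1) '' {e | e.1 ∈ M} = M \ {e0} := by
  ext e
  constructor
  · rintro ⟨x, hx, rfl⟩
    exact ⟨hx, x.2⟩
  · rintro ⟨he, he0⟩
    exact ⟨⟨e, he0⟩, he, rfl⟩

lemma uncontract_sdiff (L' : Set (H.contract e0).E) :
    H.uncontract e0 L' \ {e0} = (fun e : (H.contract e0).E => e.1) '' L' := by
  dsimp only [uncontract]
  split_ifs
  · rw [insert_sdiff_of_mem _ (mem_singleton _), sdiff_singleton_eq_self (notMem_image_val L')]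
  · exact sdiff_singleton_eq_self (notMem_image_val L')

lemma mem_uncontract_iff {L' : Set (H.contract e0).E} :
    e0 ∈ H.uncontract e0 L' ↔
      H.subDegOut (H.uncontract e0 L' \ {e0}) (H.src e0) <
        H.subDegIn (H.uncontract e0 L' \ {e0}) (H.src e0) := by
  rw [uncontract_sdiff]
  dsimp only [uncontract]
  split_ifs with h <;> simp [h, notMem_image_val L']

lemma preimage_uncontract (L' : Set (H.contract e0).E) :
    {e : (H.contract e0).E | e.1 ∈ H.uncontract e0 L'} = L' := by
  ext e
  have hval : Function.Injective fun e : (H.contract e0).E => e.1 := Subtype.val_injective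
  dsimp only [uncontract]
  split_ifs
  · simp [e.2, hval.mem_set_image]
  · simp [hval.mem_set_image]

lemma uncontract_contract (hst : H.src e0 ≠ H.tgt e0) {M : Set H.E} (hM : H.IsLinear M) :
    H.uncontract e0 {e | e.1 ∈ M} = M := by
  have hsdiff : H.uncontract e0 {e | e.1 ∈ M} \ {e0} = M \ {e0} := by
    rw [uncontract_sdiff, image_val_contract]
  have he0 : e0 ∈ H.uncontract e0 {e | e.1 ∈ M} ↔ e0 ∈ M := by
    obtain ⟨hs, -⟩ : H.IsLinearAt M (H.src e0) := hM _
    obtain ⟨d1, d2, -, -⟩ := subDeg_src_tgt_eq hst M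
    rw [mem_uncontract_iff, hsdiff]
    by_cases he : e0 ∈ M <;> simp only [he, if_true, if_false] at d1 <;>
      simp only [he, iff_true, iff_false, not_lt] <;> omega
  ext e
  by_cases he : e = e0
  · exact he ▸ he0
  · simpa [he] using congrArg (e ∈ ·) hsdiff

lemma isLinear_uncontract (hc : H.Contractible e0) {L' : Set (H.contract e0).E}
    (hL' : (H.contract e0).IsLinear L') : H.IsLinear (H.uncontract e0 L') := by
  have hmem := mem_uncontract_iff (L' := L')
  rw [← preimage_uncontract L'] at hL'
  generalize H.uncontract e0 L' = M at hL' hmem ⊢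
  obtain ⟨⟨hs, hs'⟩, hv⟩ := (isLinear_contract_iff M).1 hL'
  simp only [subDegOut_contract_src hc.1, subDegIn_contract_src hc.1] at hs hs'
  obtain ⟨d1, d2, d3, d4⟩ := subDeg_src_tgt_eq hc.1 M
  have h0 := hc.subDegOut_src_eq_zero_or M
  -- If `e0` was put back, `src e0` has out-degree 0 and in-degree 1 in `M \ {e0}`, so the single
  -- out-edge of the merged vertex leaves `tgt e0`, which then has no in-edge in `M \ {e0}`.
  refine (isLinear_iff_isLinearAt_split (H.src e0) (H.tgt e0)).2 ⟨?_, ?_, hv⟩ <;>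
    unfold IsLinearAt <;> by_cases he : e0 ∈ M <;>
    simp only [he, if_true, if_false, true_iff, false_iff, not_lt] at d1 d4 hmem <;> omega

lemma mem_of_src_tgt_mem_supp (hc : H.Contractible e0) {L : Set H.E} (hL : H.IsLinear L)
    (hs : H.src e0 ∈ H.supp L) (ht : H.tgt e0 ∈ H.supp L) : e0 ∈ L := by
  rcases hc.src_unique_or_tgt_unique with h | h
  · obtain ⟨e, heL, he⟩ := exists_src_of_mem_supp hL hs
    exact h e he ▸ heL
  · obtain ⟨e, heL, he⟩ := exists_tgt_of_mem_supp hL ht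
    exact h e he ▸ heL

lemma mk_mem_supp_contract (hst : H.src e0 ≠ H.tgt e0) {L : Set H.E} (hL : H.IsLinear L)
    {v : H.V} (hv : v ∈ H.supp L) :
    Quot.mk (H.mergeRel e0) v ∈ (H.contract e0).supp {e | e.1 ∈ L} := by
  obtain ⟨e, heL, hev⟩ := hv
  by_cases he : e = e0
  · -- the edge of `L` entering `src e0` survives the contraction and ends at `[v]`
    subst he
    obtain ⟨e1, he1L, he1⟩ := exists_tgt_of_mem_supp hL ⟨e, heL, Or.inl rfl⟩
    refine ⟨⟨e1, fun h => hst (h ▸ he1).symm⟩, he1L, Or.inr ?_⟩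
    change Quot.mk _ (H.tgt e1) = Quot.mk _ v
    rcases hev with rfl | rfl
    exacts [congrArg _ he1, he1 ▸ mk_tgt_eq_mk_src.symm]
  · exact ⟨⟨e, he⟩, heL, hev.imp (congrArg _) (congrArg _)⟩

lemma component_eq_of_mergeRel (hc : H.Contractible e0) {L : Set H.E} (hL : H.IsLinear L)
    {a b : H.V} (ha : a ∈ H.supp L) (hb : b ∈ H.supp L) (h : H.mergeRel e0 a b) :
    Quot.mk (fun x y : H.supp L => H.LAdj L x.1 y.1) ⟨a, ha⟩ = Quot.mk _ ⟨b, hb⟩ := by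
  obtain rfl | ⟨ha', hb'⟩ := h
  · rfl
  rcases ha' with rfl | rfl <;> rcases hb' with rfl | rfl
  · rfl
  · exact Quot.sound ⟨e0, mem_of_src_tgt_mem_supp hc hL ha hb, rfl, rfl⟩
  · exact (Quot.sound ⟨e0, mem_of_src_tgt_mem_supp hc hL hb ha, rfl, rfl⟩).symm
  · rfl

lemma components_contract (hc : H.Contractible e0) {L : Set H.E} (hL : H.IsLinear L) :
    (H.contract e0).components {e | e.1 ∈ L} = H.components L := by
  refine (Nat.card_quot_eq_of_surjective
    (fun x : H.supp L => (⟨Quot.mk _ x.1, mk_mem_supp_contract hc.1 hL x.2⟩ :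
      (H.contract e0).supp {e | e.1 ∈ L})) ?_ ?_ ?_ ?_).symm
  · rintro ⟨y, e, heL, h | h⟩
    · exact ⟨⟨_, e.1, heL, Or.inl rfl⟩, Subtype.ext h⟩
    · exact ⟨⟨_, e.1, heL, Or.inr rfl⟩, Subtype.ext h⟩
  · rintro ⟨-, -⟩ ⟨-, -⟩ ⟨e, heL, rfl, rfl⟩
    by_cases he : e = e0
    · exact congrArg _ (Subtype.ext (he ▸ mk_tgt_eq_mk_src.symm))
    · exact Quot.sound ⟨⟨e, he⟩, heL, rfl, rfl⟩
  · rintro ⟨a, ha⟩ ⟨b, hb⟩ h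
    exact component_eq_of_mergeRel hc hL ha hb (mk_eq_mk_iff.1 (congrArg Subtype.val h))
  · rintro ⟨a, ha⟩ ⟨b, hb⟩ ⟨e, heL, hsa, htb⟩
    have hs : H.src e.1 ∈ H.supp L := ⟨e.1, heL, Or.inl rfl⟩
    have ht : H.tgt e.1 ∈ H.supp L := ⟨e.1, heL, Or.inr rfl⟩
    calc _ = Quot.mk _ (⟨H.src e.1, hs⟩ : H.supp L) :=
          component_eq_of_mergeRel hc hL ha hs (mk_eq_mk_iff.1 hsa.symm)
      _ = Quot.mk _ (⟨H.tgt e.1, ht⟩ : H.supp L) := Quot.sound ⟨e.1, heL, rfl, rfl⟩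
      _ = _ := component_eq_of_mergeRel hc hL ht hb (mk_eq_mk_iff.1 htb)

end MDigraph

theorem linear_subgraph_bijection_general (H : MDigraph) (e0 : H.E)
    (hc : H.Contractible e0) :
    Set.BijOn (fun L : Set H.E => ({e | e.1 ∈ L} : Set (H.contract e0).E))
      {L | H.IsLinear L} {L' | (H.contract e0).IsLinear L'} ∧
    (∀ L : Set H.E, H.IsLinear L →
      (H.contract e0).components {e | e.1 ∈ L} = H.components L) := by
  refine ⟨InvOn.bijOn (f' := H.uncontract e0) ⟨?_, ?_⟩ ?_ ?_,
    fun L hL => MDigraph.components_contract hc hL⟩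
  · exact fun L hL => MDigraph.uncontract_contract hc.1 hL
  · exact fun L' _ => MDigraph.preimage_uncontract L'
  · exact fun L hL => MDigraph.isLinear_contract hc hL
  · exact fun L' hL' => MDigraph.isLinear_uncontract hc hL'

/-- Contracting a contractible edge `e0` of a semistable graph induces a
bijection between the linear subgraphs of `H` and those of the contracted graph,
preserving the number of components. -/
theorem linear_subgraph_bijection (H : MDigraph) (hss : H.Semistable) (e0 : H.E)
    (hc : H.Contractible e0) :
    Set.BijOn (fun L : Set H.E => ({e | e.1 ∈ L} : Set (H.contract e0).E))
      {L | H.IsLinear L} {L' | (H.contract e0).IsLinear L'} ∧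
    (∀ L : Set H.E, H.IsLinear L →
      (H.contract e0).components {e | e.1 ∈ L} = H.components L) :=
  linear_subgraph_bijection_general H e0 hc
end
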